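/- Gusfield's sheltering lemma: Let X be a minimum x-y-cut side with x ∈ X, y ∉ X, and let H be a minimum u-v-cut side with u, v ∉ X and x ∈ H. Then H ∪ X is also a side of a minimum u-v-cut, i.e., cost(H ∪ X) ≤ cost(H) and H ∪ X still separates u and v. -/

import Mathlib

open Finset

variable {V : Type*}

/-- Cost of the cut given by side `S`: sum of costs of ordered pairs crossing the cut. -/
def cutCost [Fintype V] [DecidableEq V] (c : V → V → NNReal) (S : Finset V) : NNReal :=
  ∑ x ∈ S, ∑ y ∈ Sᶜ, c x y

/-- Minimum `u`-`v`-cut value. -/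
noncomputable def minCut [Fintype V] [DecidableEq V] (c : V → V → NNReal) (u v : V) : NNReal :=
  sInf {w : NNReal | ∃ S : Finset V, u ∈ S ∧ v ∉ S ∧ cutCost c S = w}

/-! The cut of `H ∪ X` is no more expensive than that of `H`: by submodularity of the cut
function, `cost (H ∪ X) + cost (H ∩ X) ≤ cost H + cost X`, and `H ∩ X` still separates `x`
from `y`, so minimality of `X` gives `cost X ≤ cost (H ∩ X)`. -/

section

variable [Fintype V] [DecidableEq V] (c : V → V → NNReal)

lemma cutCost_eq_sum_ite (S : Finset V) :
    cutCost c S = ∑ a, ∑ b, if a ∈ S ∧ b ∉ S then c a b else 0 := by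
  simp only [cutCost, ite_and, ← mem_compl, sum_ite_irrel, sum_const_zero, sum_ite_mem,
    univ_inter]

lemma cutCost_union_add_cutCost_inter_le (S T : Finset V) :
    cutCost c (S ∪ T) + cutCost c (S ∩ T) ≤ cutCost c S + cutCost c T := by
  simp only [cutCost_eq_sum_ite, ← sum_add_distrib]
  refine sum_le_sum fun a _ ↦ sum_le_sum fun b _ ↦ ?_
  by_cases haS : a ∈ S <;> by_cases haT : a ∈ T <;>
    by_cases hbS : b ∈ S <;> by_cases hbT : b ∈ T <;>
    simp [haS, haT, hbS, hbT]

lemma minCut_le_cutCost {u v : V} {S : Finset V} (hu : u ∈ S) (hv : v ∉ S) :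
    minCut c u v ≤ cutCost c S :=
  csInf_le (OrderBot.bddBelow _) ⟨S, hu, hv, rfl⟩

lemma cutCost_union_le_of_cutCost_eq_minCut {x y : V} {X : Finset V} (hxX : x ∈ X)
    (hyX : y ∉ X) (hXmin : cutCost c X = minCut c x y) {H : Finset V} (hxH : x ∈ H) :
    cutCost c (H ∪ X) ≤ cutCost c H := by
  have hX_le : cutCost c X ≤ cutCost c (H ∩ X) :=
    hXmin ▸ minCut_le_cutCost c (mem_inter.2 ⟨hxH, hxX⟩) fun h ↦ hyX (mem_inter.1 h).2
  exact le_of_add_le_add_right <|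
    (add_le_add_right hX_le _).trans (cutCost_union_add_cutCost_inter_le c H X)

end

theorem gusfield_shelter_union_general [Fintype V] [DecidableEq V] (c : V → V → NNReal)
    (x y u v : V) (X H : Finset V)
    (hxX : x ∈ X) (hyX : y ∉ X) (hXmin : cutCost c X = minCut c x y)
    (hvX : v ∉ X)
    (huH : u ∈ H) (hvH : v ∉ H) (hxH : x ∈ H) :
    cutCost c (H ∪ X) ≤ cutCost c H ∧ u ∈ H ∪ X ∧ v ∉ H ∪ X :=
  ⟨cutCost_union_le_of_cutCost_eq_minCut c hxX hyX hXmin hxH, mem_union_left X huH,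
    notMem_union.2 ⟨hvH, hvX⟩⟩

theorem gusfield_shelter_union [Fintype V] [DecidableEq V] (c : V → V → NNReal)
    (hsymm : ∀ x y, c x y = c y x) (x y u v : V) (X H : Finset V)
    (hxX : x ∈ X) (hyX : y ∉ X) (hXmin : cutCost c X = minCut c x y)
    (huX : u ∉ X) (hvX : v ∉ X)
    (huH : u ∈ H) (hvH : v ∉ H) (hxH : x ∈ H) (hHmin : cutCost c H = minCut c u v) :
    cutCost c (H ∪ X) ≤ cutCost c H ∧ u ∈ H ∪ X ∧ v ∉ H ∪ X :=
  gusfield_shelter_union_general c x y u v X H hxX hyX hXmin hvX huH hvH hxH
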